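/- Fix m ≥ 1 and 1 ≤ k ≤ m, and let β₁ := (β_k^{HF})_{(1|1|0)} and β₂ := (β_k^{HF})_{(0|1|1)} be as defined. Then β₁ and β₂ are filtered: β₁(ℱ_a(B^{HF}_m) ⊗ ℱ_b(P_k^{HF} ⊗ _kP^{HF})) ⊆ ℱ_{a+b}(B^{HF}_m) and β₂(ℱ_a(P_k^{HF} ⊗ _kP^{HF}) ⊗ ℱ_b(B^{HF}_m)) ⊆ ℱ_{a+b}(B^{HF}_m) for all a, b (where ℱ_n(B^{HF}_m) = B^{HF}_m for n ≥ 1). Moreover, the induced maps on associated graded pieces coincide with the maps (β_k^{Kh})_{(1|1|0)} and (β_k^{Kh})_{(0|1|1)} over B^{Kh}_m, under the identifications gr(B^{HF}_m) ≅ B^{Kh}_m (sending 1_{ii}, 1_{ij} to 1_{ii}, 1_{ij} and [ρ_{ij}] to x_{ij}) and the grading of P_k^{Kh} ⊗ _kP^{Kh} placing v*⊗u in degree 0, v*⊗v and u*⊗u in degree 1, and u*⊗v in degree 2 (identified with the corresponding classes in ℱ_0, ℱ_1/ℱ_0 and ℱ_2/ℱ_1 of P_k^{HF} ⊗ _kP^{HF}).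 -/

import Mathlib

set_option maxHeartbeats 1000000

open Matrix

noncomputable section

namespace Stmt16
abbrev 𝔽 : Type := ZMod 2

/-- `𝔽[X]/(X²)`, modeled as the dual numbers over `𝔽 = ℤ/2ℤ`. -/
abbrev D : Type := DualNumber 𝔽

/-- The element `x + y·X` of `𝔽[X]/(X²)`. -/
def dn (x y : 𝔽) : D := TrivSqZeroExt.inl x + TrivSqZeroExt.inr y

abbrev MKh (m : ℕ) : Type := Matrix (Fin (m + 1)) (Fin (m + 1)) D
abbrev MHF (m : ℕ) : Type := Matrix (Fin (m + 1)) (Fin (m + 1)) (𝔽 × 𝔽)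

/-- `B^{Kh}_m`: lower triangular `(m+1)×(m+1)` matrices over `𝔽[X]/(X²)` whose
diagonal entries lie in `{0,1}`. -/
def BKh (m : ℕ) : Set (MKh m) :=
  {M | (∀ i j, i < j → M i j = 0) ∧ (∀ i, M i i = 0 ∨ M i i = 1)}

/-- `B^{HF}_m`: lower triangular `(m+1)×(m+1)` matrices over `𝔽 × 𝔽` whose
diagonal entries lie in `{(0,0),(1,1)}`. -/
def BHF (m : ℕ) : Set (MHF m) :=
  {M | (∀ i j, i < j → M i j = 0) ∧ (∀ i, M i i = 0 ∨ M i i = 1)}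

/-- The index `k` as an element of `Fin (m+1)`. -/
def idx (m k : ℕ) : Fin (m + 1) := Fin.ofNat (m + 1) k

/-- The left action of `B^{Kh}_m` on `P_k^{Kh}`; an element `α·u* + β·v*` is
recorded by its coordinates `(α, β)` in the basis `u*, v*`.  This is the unique
bilinear extension of the action table `1_{kk}·u* = u*`, `1_{k-1,k-1}·v* = v*`,
`x_{k,k-1}·v* = u*`, all other actions of pairs of basis elements being `0`. -/
def lActKh (m k : ℕ) (b : MKh m) (p : 𝔽 × 𝔽) : 𝔽 × 𝔽 :=
  ((b (idx m k) (idx m k)).fst * p.1 + (b (idx m k) (idx m (k - 1))).snd * p.2,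
   (b (idx m (k - 1)) (idx m (k - 1))).fst * p.2)

/-- The right action of `B^{Kh}_m` on `_kP^{Kh}`; an element `γ·u + δ·v` is
recorded by its coordinates `(γ, δ)` in the basis `u, v`.  This is the unique
bilinear extension of the action table `u·1_{kk} = u`, `u·x_{k,k-1} = v`,
`v·1_{k-1,k-1} = v`, all other actions of pairs of basis elements being `0`. -/
def rActKh (m k : ℕ) (q : 𝔽 × 𝔽) (a : MKh m) : 𝔽 × 𝔽 :=
  (q.1 * (a (idx m k) (idx m k)).fst,
   q.1 * (a (idx m k) (idx m (k - 1))).snd + q.2 * (a (idx m (k - 1)) (idx m (k - 1))).fst)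

/-- The left action of `B^{HF}_m` on `P_k^{HF}` (coordinates in the basis `u*, v*`):
the bilinear extension of `1_{kk}·u* = u*`, `1_{k-1,k-1}·v* = v*`,
`ρ_{k,k-1}·v* = σ_{k,k-1}·v* = u*`, all other actions of basis elements being `0`. -/
def lActHF (m k : ℕ) (b : MHF m) (p : 𝔽 × 𝔽) : 𝔽 × 𝔽 :=
  ((b (idx m k) (idx m k)).1 * p.1
      + ((b (idx m k) (idx m (k - 1))).1 + (b (idx m k) (idx m (k - 1))).2) * p.2,
   (b (idx m (k - 1)) (idx m (k - 1))).1 * p.2)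

/-- The right action of `B^{HF}_m` on `_kP^{HF}` (coordinates in the basis `u, v`):
the bilinear extension of `u·1_{kk} = u`, `u·ρ_{k,k-1} = u·σ_{k,k-1} = v`,
`v·1_{k-1,k-1} = v`, all other actions of basis elements being `0`. -/
def rActHF (m k : ℕ) (q : 𝔽 × 𝔽) (a : MHF m) : 𝔽 × 𝔽 :=
  (q.1 * (a (idx m k) (idx m k)).1,
   q.1 * ((a (idx m k) (idx m (k - 1))).1 + (a (idx m k) (idx m (k - 1))).2)
      + q.2 * (a (idx m (k - 1)) (idx m (k - 1))).1)

/-- The tensor product `P_k ⊗ _kP`: coordinates `(w₁, w₂, w₃, w₄)` in the basis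
`u*⊗u, u*⊗v, v*⊗u, v*⊗v`. -/
abbrev T4 : Type := 𝔽 × 𝔽 × 𝔽 × 𝔽

/-- Left action of `B^{Kh}_m` on `P_k^{Kh} ⊗ _kP^{Kh}`, via `b·(p⊗q) = (b·p)⊗q`. -/
def lActKhT (m k : ℕ) (b : MKh m) (w : T4) : T4 :=
  ((b (idx m k) (idx m k)).fst * w.1 + (b (idx m k) (idx m (k - 1))).snd * w.2.2.1,
   (b (idx m k) (idx m k)).fst * w.2.1 + (b (idx m k) (idx m (k - 1))).snd * w.2.2.2,
   (b (idx m (k - 1)) (idx m (k - 1))).fst * w.2.2.1,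
   (b (idx m (k - 1)) (idx m (k - 1))).fst * w.2.2.2)

/-- Right action of `B^{Kh}_m` on `P_k^{Kh} ⊗ _kP^{Kh}`, via `(p⊗q)·b = p⊗(q·b)`. -/
def rActKhT (m k : ℕ) (w : T4) (a : MKh m) : T4 :=
  (w.1 * (a (idx m k) (idx m k)).fst,
   w.1 * (a (idx m k) (idx m (k - 1))).snd + w.2.1 * (a (idx m (k - 1)) (idx m (k - 1))).fst,
   w.2.2.1 * (a (idx m k) (idx m k)).fst,
   w.2.2.1 * (a (idx m k) (idx m (k - 1))).snd + w.2.2.2 * (a (idx m (k - 1)) (idx m (k - 1))).fst)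

/-- Left action of `B^{HF}_m` on `P_k^{HF} ⊗ _kP^{HF}`. -/
def lActHFT (m k : ℕ) (b : MHF m) (w : T4) : T4 :=
  ((b (idx m k) (idx m k)).1 * w.1
      + ((b (idx m k) (idx m (k - 1))).1 + (b (idx m k) (idx m (k - 1))).2) * w.2.2.1,
   (b (idx m k) (idx m k)).1 * w.2.1
      + ((b (idx m k) (idx m (k - 1))).1 + (b (idx m k) (idx m (k - 1))).2) * w.2.2.2,
   (b (idx m (k - 1)) (idx m (k - 1))).1 * w.2.2.1,
   (b (idx m (k - 1)) (idx m (k - 1))).1 * w.2.2.2)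

/-- Right action of `B^{HF}_m` on `P_k^{HF} ⊗ _kP^{HF}`. -/
def rActHFT (m k : ℕ) (w : T4) (a : MHF m) : T4 :=
  (w.1 * (a (idx m k) (idx m k)).1,
   w.1 * ((a (idx m k) (idx m (k - 1))).1 + (a (idx m k) (idx m (k - 1))).2)
      + w.2.1 * (a (idx m (k - 1)) (idx m (k - 1))).1,
   w.2.2.1 * (a (idx m k) (idx m k)).1,
   w.2.2.1 * ((a (idx m k) (idx m (k - 1))).1 + (a (idx m k) (idx m (k - 1))).2)
      + w.2.2.2 * (a (idx m (k - 1)) (idx m (k - 1))).1)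

/-- `γ_k^{Kh} : B^{Kh}_m → P_k^{Kh} ⊗ _kP^{Kh}`, `b ↦ b·(u*⊗u + v*⊗v)`. -/
def γKh (m k : ℕ) (b : MKh m) : T4 := lActKhT m k b (1, 0, 0, 1)

/-- `γ_k^{HF} : B^{HF}_m → P_k^{HF} ⊗ _kP^{HF}`, `b ↦ b·(u*⊗u + v*⊗v)`. -/
def γHF (m k : ℕ) (b : MHF m) : T4 := lActHFT m k b (1, 0, 0, 1)

/-- `(β_k^{Kh})_{(1|1|0)} : B^{Kh}_m ⊗ (P_k^{Kh} ⊗ _kP^{Kh}) → B^{Kh}_m`: the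
bilinear map given on pairs of basis elements by `(1_{ik}, u*⊗u) ↦ x_{ik}` (`i ≥ k+1`),
`(1_{i,k-1}, v*⊗u) ↦ 1_{ik}` (`i ≥ k`), `(x_{i,k-1}, v*⊗u) ↦ x_{ik}` (`i ≥ k+1`),
`(1_{i,k-1}, v*⊗v) ↦ x_{i,k-1}` (`i ≥ k`), all other values being `0`. -/
def βKh1 (m k : ℕ) (b : MKh m) (w : T4) : MKh m :=
  (∑ i : Fin (m + 1), if k < (i : ℕ) then
      single i (idx m k)
        (dn ((b i (idx m (k - 1))).fst * w.2.2.1)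
            ((b i (idx m k)).fst * w.1 + (b i (idx m (k - 1))).snd * w.2.2.1)) else 0)
  + single (idx m k) (idx m k) (dn ((b (idx m k) (idx m (k - 1))).fst * w.2.2.1) 0)
  + ∑ i : Fin (m + 1), if k ≤ (i : ℕ) then
      single i (idx m (k - 1)) (dn 0 ((b i (idx m (k - 1))).fst * w.2.2.2)) else 0

/-- `(β_k^{Kh})_{(0|1|1)} : (P_k^{Kh} ⊗ _kP^{Kh}) ⊗ B^{Kh}_m → B^{Kh}_m`: the
bilinear map given on pairs of basis elements by `(u*⊗u, 1_{kj}) ↦ x_{kj}` (`j ≤ k-1`),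
`(v*⊗u, 1_{kj}) ↦ 1_{k-1,j}` (`j ≤ k-1`), `(v*⊗u, x_{kj}) ↦ x_{k-1,j}` (`j ≤ k-2`),
`(v*⊗v, 1_{k-1,j}) ↦ x_{k-1,j}` (`j ≤ k-2`), all other values being `0`. -/
def βKh2 (m k : ℕ) (w : T4) (a : MKh m) : MKh m :=
  (∑ j : Fin (m + 1), if (j : ℕ) < k then
      single (idx m k) j (dn 0 (w.1 * (a (idx m k) j).fst)) else 0)
  + (∑ j : Fin (m + 1), if (j : ℕ) < k then
      single (idx m (k - 1)) j (dn (w.2.2.1 * (a (idx m k) j).fst) 0) else 0)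
  + ∑ j : Fin (m + 1), if (j : ℕ) < k - 1 then
      single (idx m (k - 1)) j
        (dn 0 (w.2.2.1 * (a (idx m k) j).snd + w.2.2.2 * (a (idx m (k - 1)) j).fst)) else 0

/-- `(β_k^{HF})_{(1|1|0)} : B^{HF}_m ⊗ (P_k^{HF} ⊗ _kP^{HF}) → B^{HF}_m`: the
bilinear map given on pairs of basis elements by `(ρ_{ik}, u*⊗u) ↦ ρ_{ik}` (`i ≥ k+1`),
`(σ_{k,k-1}, v*⊗u) ↦ 1_{kk}`, `(ρ_{i,k-1}, v*⊗u) ↦ ρ_{ik}` (`i ≥ k+1`),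
`(σ_{i,k-1}, v*⊗u) ↦ σ_{ik}` (`i ≥ k+1`), `(ρ_{i,k-1}, v*⊗v) ↦ ρ_{i,k-1}` (`i ≥ k`),
all other values being `0`. -/
def βHF1 (m k : ℕ) (b : MHF m) (w : T4) : MHF m :=
  (∑ i : Fin (m + 1), if k < (i : ℕ) then
      single i (idx m k)
        ((b i (idx m k)).1 * w.1 + (b i (idx m (k - 1))).1 * w.2.2.1,
         (b i (idx m (k - 1))).2 * w.2.2.1) else 0)
  + single (idx m k) (idx m k)
      ((b (idx m k) (idx m (k - 1))).2 * w.2.2.1, (b (idx m k) (idx m (k - 1))).2 * w.2.2.1)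
  + ∑ i : Fin (m + 1), if k ≤ (i : ℕ) then
      single i (idx m (k - 1)) ((b i (idx m (k - 1))).1 * w.2.2.2, 0) else 0

/-- `(β_k^{HF})_{(0|1|1)} : (P_k^{HF} ⊗ _kP^{HF}) ⊗ B^{HF}_m → B^{HF}_m`: the
bilinear map given on pairs of basis elements by `(u*⊗u, ρ_{kj}) ↦ ρ_{kj}` (`j ≤ k-1`),
`(v*⊗u, σ_{k,k-1}) ↦ 1_{k-1,k-1}`, `(v*⊗u, ρ_{kj}) ↦ ρ_{k-1,j}` (`j ≤ k-2`),
`(v*⊗u, σ_{kj}) ↦ σ_{k-1,j}` (`j ≤ k-2`), `(v*⊗v, ρ_{k-1,j}) ↦ ρ_{k-1,j}` (`j ≤ k-2`),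
all other values being `0`. -/
def βHF2 (m k : ℕ) (w : T4) (a : MHF m) : MHF m :=
  (∑ j : Fin (m + 1), if (j : ℕ) < k then
      single (idx m k) j (w.1 * (a (idx m k) j).1, 0) else 0)
  + single (idx m (k - 1)) (idx m (k - 1))
      (w.2.2.1 * (a (idx m k) (idx m (k - 1))).2, w.2.2.1 * (a (idx m k) (idx m (k - 1))).2)
  + ∑ j : Fin (m + 1), if (j : ℕ) < k - 1 then
      single (idx m (k - 1)) j
        (w.2.2.1 * (a (idx m k) j).1 + w.2.2.2 * (a (idx m (k - 1)) j).1,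
         w.2.2.1 * (a (idx m k) j).2) else 0

/-- The left action on the mapping cone `(P_k^{Kh} ⊗ _kP^{Kh}) ⊕ B^{Kh}_m`,
`a·(w, b) := (a·w, β₁(a,w) + a·b)`. -/
def coneLKh (m k : ℕ) (a : MKh m) (p : T4 × MKh m) : T4 × MKh m :=
  (lActKhT m k a p.1, βKh1 m k a p.1 + a * p.2)

/-- The right action on the mapping cone, `(w, b)·a := (w·a, β₂(w,a) + b·a)`. -/
def coneRKh (m k : ℕ) (p : T4 × MKh m) (a : MKh m) : T4 × MKh m :=
  (rActKhT m k p.1 a, βKh2 m k p.1 a + p.2 * a)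

def coneLHF (m k : ℕ) (a : MHF m) (p : T4 × MHF m) : T4 × MHF m :=
  (lActHFT m k a p.1, βHF1 m k a p.1 + a * p.2)

def coneRHF (m k : ℕ) (p : T4 × MHF m) (a : MHF m) : T4 × MHF m :=
  (rActHFT m k p.1 a, βHF2 m k p.1 a + p.2 * a)

/-- The degree-0 identification `ℱ₀(B^{HF}_m) ≅ (degree-0 part of B^{Kh}_m)`,
sending `1_{ii}, 1_{ij} = ρ_{ij} + σ_{ij}` to `1_{ii}, 1_{ij}`: on matrix entries,
`(c, c) ↦ c`. -/
def σ0 (m : ℕ) (M : MHF m) : MKh m := Matrix.of fun i j => dn ((M i j).1) 0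

/-- The degree-1 identification `ℱ₁/ℱ₀(B^{HF}_m) ≅ (degree-1 part of B^{Kh}_m)`,
sending the class `[ρ_{ij}]` to `x_{ij}`: on matrix entries, `(r, s) ↦ (r+s)·X`
(which kills `ℱ₀` and sends `ρ_{ij}`, and any representative of `[ρ_{ij}]`, to `x_{ij}`). -/
def σ1 (m : ℕ) (M : MHF m) : MKh m := Matrix.of fun i j => dn 0 ((M i j).1 + (M i j).2)

/-- `ℱ₀(B^{HF}_m)`: the 𝔽-span of the `1_{ii}` and the `1_{ij} = ρ_{ij} + σ_{ij}`,
i.e. lower triangular matrices all of whose entries lie in `𝔽·(1,1)`. -/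
def F0HF (m : ℕ) : Set (MHF m) :=
  {M | (∀ i j, i < j → M i j = 0) ∧ ∀ i j, (M i j).1 = (M i j).2}

/-- The filtration `ℱ_{-1} = 0 ⊆ ℱ₀ ⊆ ℱ₁ = B^{HF}_m` (with `ℱ_n = B^{HF}_m` for
`n ≥ 1` and `ℱ_n = 0` for `n ≤ -1`). -/
def FiltB (m : ℕ) : ℤ → Set (MHF m) := fun n =>
  if n < 0 then {0} else if n = 0 then F0HF m else BHF m

/-- The filtration on `P_k^{HF} ⊗ _kP^{HF}`:
`ℱ₀ = 𝔽·(v*⊗u) ⊆ ℱ₁ = span{v*⊗u, v*⊗v, u*⊗u} ⊆ ℱ₂ = everything`. -/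
def FiltT : ℤ → Set T4 := fun n =>
  if n < 0 then {0}
  else if n = 0 then {w | w.1 = 0 ∧ w.2.1 = 0 ∧ w.2.2.2 = 0}
  else if n = 1 then {w | w.2.1 = 0}
  else Set.univ

/-- The identification of `ℱ₁/ℱ₀(P_k^{HF} ⊗ _kP^{HF})` with the degree-1 part
`span{u*⊗u, v*⊗v}` of `P_k^{Kh} ⊗ _kP^{Kh}`: the class of `w` is recorded by its
`u*⊗u` and `v*⊗v` coordinates. -/
def θ1 (w : T4) : T4 := (w.1, 0, 0, w.2.2.2)

/-! Everything is entrywise. The `(i, j)` entry of each `β` is a sum of three terms supported,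
because `k ≥ 1`, at pairwise disjoint positions of row or column `k` or `k - 1`, so every claim
reduces to an identity in `𝔽`. The values of `β` are lower triangular with diagonal entries of the
form `(c, c)`, hence lie in `ℱ₁ = B^{HF}_m`; on `ℱ₀ ⊗ ℱ₀` every entry has this form, hence the value
lies in `ℱ₀`; negative filtration levels are zero and `β` vanishes when either argument does. On
graded pieces `σ1` records `ρ + σ`, and the HF and Kh formulas differ only by terms counted twice,
which vanish in characteristic `2`. -/

section
variable {ι α : Type*} [Fintype ι] [DecidableEq ι] [AddCommMonoid α]

theorem sum_ite_single_col_apply (P : ι → Prop) [DecidablePred P] (c : ι) (v : ι → α)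
    (i j : ι) :
    (∑ i', if P i' then single i' c (v i') else 0) i j = if P i ∧ c = j then v i else 0 := by
  rw [Matrix.sum_apply, Fintype.sum_eq_single i] <;> aesop

theorem sum_ite_single_row_apply (P : ι → Prop) [DecidablePred P] (r : ι) (v : ι → α)
    (i j : ι) :
    (∑ j', if P j' then single r j' (v j') else 0) i j = if r = i ∧ P j then v j else 0 := by
  rw [Matrix.sum_apply, Fintype.sum_eq_single j] <;> aesop

end

theorem eq_zero_or_eq_one_of_fst_eq_snd {p : 𝔽 × 𝔽} (h : p.1 = p.2) : p = 0 ∨ p = 1 := by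
  obtain ⟨a, b⟩ := p
  dsimp only at h
  subst h
  fin_cases a <;> decide

@[simp] theorem dn_fst (x y : 𝔽) : (dn x y).fst = x := by simp [dn]

@[simp] theorem dn_snd (x y : 𝔽) : (dn x y).snd = y := by simp [dn]

@[simp] theorem dn_zero : dn 0 0 = 0 := by simp [dn]

theorem val_idx {m k : ℕ} (h : k ≤ m) : (idx m k : ℕ) = k := by
  simp [idx, Nat.mod_eq_of_lt (Nat.lt_succ_of_le h)]

@[simp] theorem idx_val {m : ℕ} (j : Fin (m + 1)) : idx m j = j := by
  simp [idx]

section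
variable {m k : ℕ}

theorem βHF1_apply (hk : k ≤ m) (b : MHF m) (w : T4) (i j : Fin (m + 1)) :
    βHF1 m k b w i j =
      (if k < i ∧ k = j then
        ((b i (idx m k)).1 * w.1 + (b i (idx m (k - 1))).1 * w.2.2.1,
         (b i (idx m (k - 1))).2 * w.2.2.1) else 0)
      + (if k = i ∧ k = j then
        ((b (idx m k) (idx m (k - 1))).2 * w.2.2.1,
         (b (idx m k) (idx m (k - 1))).2 * w.2.2.1) else 0)
      + (if k ≤ i ∧ k - 1 = j then ((b i (idx m (k - 1))).1 * w.2.2.2, 0) else 0) := by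
  simp only [βHF1, Matrix.add_apply, sum_ite_single_col_apply, single_apply, Fin.ext_iff,
    val_idx hk, val_idx ((Nat.sub_le k 1).trans hk)]

theorem βKh1_apply (hk : k ≤ m) (b : MKh m) (w : T4) (i j : Fin (m + 1)) :
    βKh1 m k b w i j =
      (if k < i ∧ k = j then
        dn ((b i (idx m (k - 1))).fst * w.2.2.1)
          ((b i (idx m k)).fst * w.1 + (b i (idx m (k - 1))).snd * w.2.2.1) else 0)
      + (if k = i ∧ k = j then dn ((b (idx m k) (idx m (k - 1))).fst * w.2.2.1) 0 else 0)
      + (if k ≤ i ∧ k - 1 = j then dn 0 ((b i (idx m (k - 1))).fst * w.2.2.2) else 0) := by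
  simp only [βKh1, Matrix.add_apply, sum_ite_single_col_apply, single_apply, Fin.ext_iff,
    val_idx hk, val_idx ((Nat.sub_le k 1).trans hk)]

theorem βHF2_apply (hk : k ≤ m) (w : T4) (a : MHF m) (i j : Fin (m + 1)) :
    βHF2 m k w a i j =
      (if k = i ∧ j < k then (w.1 * (a (idx m k) j).1, 0) else 0)
      + (if k - 1 = i ∧ k - 1 = j then
        (w.2.2.1 * (a (idx m k) (idx m (k - 1))).2,
         w.2.2.1 * (a (idx m k) (idx m (k - 1))).2) else 0)
      + (if k - 1 = i ∧ j < k - 1 then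
        (w.2.2.1 * (a (idx m k) j).1 + w.2.2.2 * (a (idx m (k - 1)) j).1,
         w.2.2.1 * (a (idx m k) j).2) else 0) := by
  simp only [βHF2, Matrix.add_apply, sum_ite_single_row_apply, single_apply, Fin.ext_iff,
    val_idx hk, val_idx ((Nat.sub_le k 1).trans hk)]

theorem βKh2_apply (hk : k ≤ m) (w : T4) (a : MKh m) (i j : Fin (m + 1)) :
    βKh2 m k w a i j =
      (if k = i ∧ j < k then dn 0 (w.1 * (a (idx m k) j).fst) else 0)
      + (if k - 1 = i ∧ j < k then dn (w.2.2.1 * (a (idx m k) j).fst) 0 else 0)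
      + (if k - 1 = i ∧ j < k - 1 then
        dn 0 (w.2.2.1 * (a (idx m k) j).snd + w.2.2.2 * (a (idx m (k - 1)) j).fst) else 0) := by
  simp only [βKh2, Matrix.add_apply, sum_ite_single_row_apply, Fin.ext_iff,
    val_idx hk, val_idx ((Nat.sub_le k 1).trans hk)]

theorem βHF1_zero_left (w : T4) : βHF1 m k 0 w = 0 := by simp [βHF1, Prod.mk_zero_zero]

theorem βHF1_zero_right (x : MHF m) : βHF1 m k x 0 = 0 := by simp [βHF1, Prod.mk_zero_zero]

theorem βHF2_zero_left (x : MHF m) : βHF2 m k 0 x = 0 := by simp [βHF2, Prod.mk_zero_zero]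

theorem βHF2_zero_right (w : T4) : βHF2 m k w 0 = 0 := by simp [βHF2, Prod.mk_zero_zero]

theorem βHF1_mem_BHF (hk1 : 1 ≤ k) (hk2 : k ≤ m) (x : MHF m) (w : T4) :
    βHF1 m k x w ∈ BHF m := by
  refine ⟨fun i j hij => ?_, fun i => eq_zero_or_eq_one_of_fst_eq_snd ?_⟩ <;>
    rw [βHF1_apply hk2] <;> split_ifs <;> first | omega | simp

theorem βHF2_mem_BHF (hk : k ≤ m) (w : T4) (x : MHF m) : βHF2 m k w x ∈ BHF m := by
  refine ⟨fun i j hij => ?_, fun i => eq_zero_or_eq_one_of_fst_eq_snd ?_⟩ <;>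
    rw [βHF2_apply hk] <;> split_ifs <;> first | omega | simp

theorem βHF1_mem_F0HF (hk1 : 1 ≤ k) (hk2 : k ≤ m) {x : MHF m} {w : T4}
    (hx : x ∈ F0HF m) (hw : w ∈ FiltT 0) : βHF1 m k x w ∈ F0HF m := by
  obtain ⟨hw1, -, hw4⟩ := hw
  refine ⟨(βHF1_mem_BHF hk1 hk2 x w).1, fun i j => ?_⟩
  rw [βHF1_apply hk2]
  split_ifs <;> simp_all [hx.2]

theorem βHF2_mem_F0HF (hk : k ≤ m) {w : T4} {x : MHF m}
    (hw : w ∈ FiltT 0) (hx : x ∈ F0HF m) : βHF2 m k w x ∈ F0HF m := by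
  obtain ⟨hw1, -, hw4⟩ := hw
  refine ⟨(βHF2_mem_BHF hk w x).1, fun i j => ?_⟩
  rw [βHF2_apply hk]
  split_ifs <;> simp_all [hx.2]

theorem FiltB_of_neg {n : ℤ} (h : n < 0) : FiltB m n = {0} := if_pos h

theorem FiltB_of_pos {n : ℤ} (h : 0 < n) : FiltB m n = BHF m := by
  simp [FiltB, h.not_gt, h.ne']

theorem FiltT_of_neg {n : ℤ} (h : n < 0) : FiltT n = {0} := if_pos h

theorem zero_mem_FiltB (n : ℤ) : (0 : MHF m) ∈ FiltB m n := by
  unfold FiltB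
  split_ifs
  · rfl
  · exact ⟨fun _ _ _ => rfl, fun _ _ => rfl⟩
  · exact ⟨fun _ _ _ => rfl, fun _ => Or.inl rfl⟩

theorem mem_FiltB_add {α β : Type*} [Zero α] [Zero β] {A : ℤ → Set α} {B : ℤ → Set β}
    (hA : ∀ a < 0, A a = {0}) (hB : ∀ b < 0, B b = {0}) {f : α → β → MHF m}
    (hf_zero_left : ∀ y, f 0 y = 0) (hf_zero_right : ∀ x, f x 0 = 0)
    (hf_F0 : ∀ x ∈ A 0, ∀ y ∈ B 0, f x y ∈ F0HF m) (hf_BHF : ∀ x y, f x y ∈ BHF m)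
    {a b : ℤ} {x : α} {y : β} (hx : x ∈ A a) (hy : y ∈ B b) : f x y ∈ FiltB m (a + b) := by
  rcases lt_or_ge a 0 with ha | ha
  · rw [hA a ha, Set.mem_singleton_iff] at hx
    rw [hx, hf_zero_left]
    exact zero_mem_FiltB _
  rcases lt_or_ge b 0 with hb | hb
  · rw [hB b hb, Set.mem_singleton_iff] at hy
    rw [hy, hf_zero_right]
    exact zero_mem_FiltB _
  rcases (add_nonneg ha hb).eq_or_lt with hab | hab
  · obtain ⟨rfl, rfl⟩ : a = 0 ∧ b = 0 := by omega
    exact hf_F0 x hx y hy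
  · rw [FiltB_of_pos hab]
    exact hf_BHF x y

theorem σ0_βHF1 (hk1 : 1 ≤ k) (hk2 : k ≤ m) {x : MHF m} {w : T4}
    (hx : x ∈ F0HF m) (hw : w ∈ FiltT 0) : σ0 m (βHF1 m k x w) = βKh1 m k (σ0 m x) w := by
  obtain ⟨hw1, -, hw4⟩ := hw
  ext i j : 1
  simp only [σ0, of_apply, βHF1_apply hk2, βKh1_apply hk2]
  split_ifs <;> first | omega | simp_all [hx.2, CharTwo.add_self_eq_zero]

theorem σ1_βHF1 (hk1 : 1 ≤ k) (hk2 : k ≤ m) (x : MHF m) {w : T4} (hw : w ∈ FiltT 0) :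
    σ1 m (βHF1 m k x w) = βKh1 m k (σ1 m x) w := by
  obtain ⟨hw1, -, hw4⟩ := hw
  ext i j : 1
  simp only [σ1, of_apply, βHF1_apply hk2, βKh1_apply hk2]
  split_ifs <;> first | omega | simp_all [add_mul, CharTwo.add_self_eq_zero]

theorem σ1_βHF1_θ1 (hk1 : 1 ≤ k) (hk2 : k ≤ m) {x : MHF m} (hx : x ∈ F0HF m) (w : T4) :
    σ1 m (βHF1 m k x w) = βKh1 m k (σ0 m x) (θ1 w) := by
  ext i j : 1
  simp only [σ0, σ1, θ1, of_apply, βHF1_apply hk2, βKh1_apply hk2]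
  split_ifs <;> first | omega | simp_all [hx.2, add_assoc, CharTwo.add_self_eq_zero]

theorem σ0_βHF2 (hk1 : 1 ≤ k) (hk2 : k ≤ m) {w : T4} {x : MHF m}
    (hw : w ∈ FiltT 0) (hx : x ∈ F0HF m) : σ0 m (βHF2 m k w x) = βKh2 m k w (σ0 m x) := by
  obtain ⟨hw1, -, hw4⟩ := hw
  ext i j : 1
  simp only [σ0, of_apply, βHF2_apply hk2, βKh2_apply hk2]
  split_ifs <;> first | omega | simp_all [hx.2, CharTwo.add_self_eq_zero]

theorem σ1_βHF2 (hk1 : 1 ≤ k) (hk2 : k ≤ m) {w : T4} (hw : w ∈ FiltT 0) (x : MHF m) :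
    σ1 m (βHF2 m k w x) = βKh2 m k w (σ1 m x) := by
  obtain ⟨hw1, -, hw4⟩ := hw
  ext i j : 1
  simp only [σ1, of_apply, βHF2_apply hk2, βKh2_apply hk2]
  split_ifs <;> first | omega | simp_all [mul_add, CharTwo.add_self_eq_zero]

theorem σ1_βHF2_θ1 (hk1 : 1 ≤ k) (hk2 : k ≤ m) (w : T4) {x : MHF m} (hx : x ∈ F0HF m) :
    σ1 m (βHF2 m k w x) = βKh2 m k (θ1 w) (σ0 m x) := by
  ext i j : 1
  simp only [σ0, σ1, θ1, of_apply, βHF2_apply hk2, βKh2_apply hk2]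
  split_ifs <;> first | omega | simp_all [hx.2, add_comm, add_left_comm, CharTwo.add_self_eq_zero]

end

theorem statement_16_general (m k : ℕ) (hk1 : 1 ≤ k) (hk2 : k ≤ m) :
    -- `β₁` and `β₂` are filtered
    (∀ a b : ℤ, ∀ x ∈ FiltB m a, ∀ w ∈ FiltT b, βHF1 m k x w ∈ FiltB m (a + b)) ∧
    (∀ a b : ℤ, ∀ w ∈ FiltT a, ∀ x ∈ FiltB m b, βHF2 m k w x ∈ FiltB m (a + b)) ∧
    -- induced map on graded pieces in bidegree (0,0)
    (∀ x ∈ FiltB m 0, ∀ w ∈ FiltT 0, σ0 m (βHF1 m k x w) = βKh1 m k (σ0 m x) w) ∧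
    -- bidegree (1,0)
    (∀ x ∈ FiltB m 1, ∀ w ∈ FiltT 0, σ1 m (βHF1 m k x w) = βKh1 m k (σ1 m x) w) ∧
    -- bidegree (0,1)
    (∀ x ∈ FiltB m 0, ∀ w ∈ FiltT 1, σ1 m (βHF1 m k x w) = βKh1 m k (σ0 m x) (θ1 w)) ∧
    -- bidegree (0,0) for β₂
    (∀ w ∈ FiltT 0, ∀ x ∈ FiltB m 0, σ0 m (βHF2 m k w x) = βKh2 m k w (σ0 m x)) ∧
    -- bidegree (0,1) for β₂
    (∀ w ∈ FiltT 0, ∀ x ∈ FiltB m 1, σ1 m (βHF2 m k w x) = βKh2 m k w (σ1 m x)) ∧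
    -- bidegree (1,0) for β₂
    (∀ w ∈ FiltT 1, ∀ x ∈ FiltB m 0, σ1 m (βHF2 m k w x) = βKh2 m k (θ1 w) (σ0 m x)) :=
  ⟨fun _ _ _ hx _ hw => mem_FiltB_add (fun _ => FiltB_of_neg) (fun _ => FiltT_of_neg)
      βHF1_zero_left βHF1_zero_right (fun _ hx _ hw => βHF1_mem_F0HF hk1 hk2 hx hw)
      (βHF1_mem_BHF hk1 hk2) hx hw,
    fun _ _ _ hw _ hx => mem_FiltB_add (fun _ => FiltT_of_neg) (fun _ => FiltB_of_neg)
      βHF2_zero_left βHF2_zero_right (fun _ hw _ hx => βHF2_mem_F0HF hk2 hw hx)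
      (βHF2_mem_BHF hk2) hw hx,
    fun _ hx _ hw => σ0_βHF1 hk1 hk2 hx hw,
    fun x _ _ hw => σ1_βHF1 hk1 hk2 x hw,
    fun _ hx w _ => σ1_βHF1_θ1 hk1 hk2 hx w,
    fun _ hw _ hx => σ0_βHF2 hk1 hk2 hw hx,
    fun _ hw x _ => σ1_βHF2 hk1 hk2 hw x,
    fun w _ _ hx => σ1_βHF2_θ1 hk1 hk2 w hx⟩

/-- The maps `β₁ = (β_k^{HF})_{(1|1|0)}` and `β₂ = (β_k^{HF})_{(0|1|1)}`
are filtered: `β₁(ℱ_a ⊗ ℱ_b) ⊆ ℱ_{a+b}` and `β₂(ℱ_a ⊗ ℱ_b) ⊆ ℱ_{a+b}`.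
Moreover the induced maps on associated graded pieces coincide with
`(β_k^{Kh})_{(1|1|0)}` and `(β_k^{Kh})_{(0|1|1)}` under the identifications
`gr(B^{HF}_m) ≅ B^{Kh}_m` (`σ0` in degree 0, `σ1 : [ρ_{ij}] ↦ x_{ij}` in degree 1)
and the grading on `P_k^{Kh} ⊗ _kP^{Kh}` placing `v*⊗u` in degree 0, `v*⊗v`, `u*⊗u`
in degree 1 and `u*⊗v` in degree 2 (`θ1` records the degree-1 class). -/
theorem statement_16 (m k : ℕ) (hm : 1 ≤ m) (hk1 : 1 ≤ k) (hk2 : k ≤ m) :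
    -- `β₁` and `β₂` are filtered
    (∀ a b : ℤ, ∀ x ∈ FiltB m a, ∀ w ∈ FiltT b, βHF1 m k x w ∈ FiltB m (a + b)) ∧
    (∀ a b : ℤ, ∀ w ∈ FiltT a, ∀ x ∈ FiltB m b, βHF2 m k w x ∈ FiltB m (a + b)) ∧
    -- induced map on graded pieces in bidegree (0,0)
    (∀ x ∈ FiltB m 0, ∀ w ∈ FiltT 0, σ0 m (βHF1 m k x w) = βKh1 m k (σ0 m x) w) ∧
    -- bidegree (1,0)
    (∀ x ∈ FiltB m 1, ∀ w ∈ FiltT 0, σ1 m (βHF1 m k x w) = βKh1 m k (σ1 m x) w) ∧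
    -- bidegree (0,1)
    (∀ x ∈ FiltB m 0, ∀ w ∈ FiltT 1, σ1 m (βHF1 m k x w) = βKh1 m k (σ0 m x) (θ1 w)) ∧
    -- bidegree (0,0) for β₂
    (∀ w ∈ FiltT 0, ∀ x ∈ FiltB m 0, σ0 m (βHF2 m k w x) = βKh2 m k w (σ0 m x)) ∧
    -- bidegree (0,1) for β₂
    (∀ w ∈ FiltT 0, ∀ x ∈ FiltB m 1, σ1 m (βHF2 m k w x) = βKh2 m k w (σ1 m x)) ∧
    -- bidegree (1,0) for β₂
    (∀ w ∈ FiltT 1, ∀ x ∈ FiltB m 0, σ1 m (βHF2 m k w x) = βKh2 m k (θ1 w) (σ0 m x)) :=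
  statement_16_general m k hk1 hk2

end Stmt16
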